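/- arXiv:1912.07275 — 2 statements merged into one kernel-verified Lean document; each statement's English description precedes it below -/
import Mathlib

section
/- There exists a constant C > 0, depending only on d and γ, such that for all r ≥ 1, all integers k ≥ 1, and all ξ ≥ 0: ∫_{−ρ/2}^{ρ/2} e^{−t²κ̃₂/2} | e^{q_k(t)} − ∑_{ℓ=0}^{k} q_k(t)^ℓ/ℓ! | dt ≤ C^k k^{k/2} / ( √κ̃₂ · (√κ̃₂ · ρ)^{k+1} ). (Lemma 3.3.) -/
open MeasureTheory Finset

noncomputable section

/-- ρ = r^{d/2} -/
def rho (d : ℕ) (r : ℝ) : ℝ := r ^ ((d : ℝ) / 2)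

/-- tilted cumulant coefficients κ̃_n = d₁ ∫₀¹ e^{ξu/ρ} u^{n-1-d/γ} du -/
def kt (d : ℕ) (γ r ξ : ℝ) (n : ℕ) : ℝ :=
  (2 - (d : ℝ) / γ) *
    ∫ u in (0:ℝ)..1, Real.exp (ξ * u / rho d r) * u ^ ((n : ℝ) - 1 - (d : ℝ) / γ)

/-- q_k(t) = ρ² ∑_{n=3}^{k+2} (it/ρ)^n κ̃_n/n! -/
def qk (d : ℕ) (γ r ξ : ℝ) (k : ℕ) (t : ℝ) : ℂ :=
  ((rho d r : ℝ) : ℂ) ^ 2 *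
    ∑ n ∈ Finset.Icc 3 (k + 2),
      (Complex.I * (t : ℂ) / ((rho d r : ℝ) : ℂ)) ^ n *
        ((kt d γ r ξ n / (n.factorial : ℝ) : ℝ) : ℂ)

open scoped Nat
open Real

/-!
Since the `κ̃_n` decrease in `n`, for `|t| ≤ ρ/2` the sum defining `q_k(t)` is dominated by a
geometric series of ratio `1/2`, so `‖q_k(t)‖ ≤ κ̃₂ |t|³ / (3ρ) ≤ κ̃₂ t² / 6`. The Taylor
remainder of `exp` at order `k` is at most `‖q‖^(k+1) / (k+1)! · e^‖q‖`. The factor `e^‖q‖`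
eats a third of the Gaussian weight `e^(-κ̃₂ t²/2)`; another third times `|t|^(3(k+1))` is at
most `(9(k+1)/κ̃₂)^(3(k+1)/2)`; the last third integrates to at most `√(6π/κ̃₂)`.
Finally `m^m ≤ e^m m!` turns `(k+1)^(3(k+1)/2) / (k+1)!` into `C^k k^(k/2)`.
-/

namespace Real

lemma exp_sub_sum_range_le_pow_div_factorial_mul_exp {y : ℝ} (hy : 0 ≤ y) (n : ℕ) :
    exp y - ∑ m ∈ range n, y ^ m / m ! ≤ y ^ n / n ! * exp y := by
  have hexp : HasSum (fun m ↦ y ^ m / m !) (exp y) := by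
    simpa [← Real.exp_eq_exp_ℝ] using NormedSpace.expSeries_div_hasSum_exp y
  refine hasSum_le (fun j ↦ ?_) ((hasSum_nat_add_iff' n).2 hexp) (hexp.mul_left _)
  have hfac : (n ! * j ! : ℝ) ≤ (j + n)! := by
    exact_mod_cast Nat.le_of_dvd (Nat.factorial_pos _)
      (add_comm n j ▸ Nat.factorial_mul_factorial_dvd_factorial_add n j)
  rw [div_mul_div_comm, ← pow_add, add_comm n j]
  gcongr

lemma rpow_mul_exp_neg_le {x p : ℝ} (hx : 0 ≤ x) (hp : 0 < p) : x ^ p * exp (-x) ≤ p ^ p := by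
  rcases hx.eq_or_lt with rfl | hx
  · rw [zero_rpow hp.ne', zero_mul]; positivity
  have hlog : log x - log p ≤ x / p - 1 := by
    rw [← log_div hx.ne' hp.ne']; exact log_le_sub_one_of_pos (by positivity)
  rw [rpow_def_of_pos hx, rpow_def_of_pos hp, ← exp_add, exp_le_exp]
  have hmul := mul_le_mul_of_nonneg_left hlog hp.le
  rw [mul_sub, mul_sub, mul_div_cancel₀ _ hp.ne'] at hmul
  linarith

lemma abs_pow_mul_exp_neg_mul_sq_le {b : ℝ} (hb : 0 < b) {n : ℕ} (hn : n ≠ 0) (t : ℝ) :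
    |t| ^ n * exp (-b * t ^ 2) ≤ √(n / (2 * b)) ^ n := by
  have hp : 0 < (n : ℝ) / 2 := by positivity
  have habs : |t| ^ n = (t ^ 2) ^ ((n : ℝ) / 2) := by
    rw [rpow_div_two_eq_sqrt _ (sq_nonneg t), sqrt_sq_eq_abs, rpow_natCast]
  have hsqrt : √(n / (2 * b)) ^ n = (n / (2 * b)) ^ ((n : ℝ) / 2) := by
    rw [rpow_div_two_eq_sqrt _ (by positivity), rpow_natCast]
  rw [habs, hsqrt]
  calc (t ^ 2) ^ ((n : ℝ) / 2) * exp (-b * t ^ 2)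
      = (b * t ^ 2) ^ ((n : ℝ) / 2) * exp (-(b * t ^ 2)) / b ^ ((n : ℝ) / 2) := by
        rw [mul_rpow hb.le (sq_nonneg t), neg_mul]
        field_simp
    _ ≤ ((n : ℝ) / 2) ^ ((n : ℝ) / 2) / b ^ ((n : ℝ) / 2) := by
        gcongr
        exact rpow_mul_exp_neg_le (by positivity) hp
    _ = (n / (2 * b)) ^ ((n : ℝ) / 2) := by
        rw [← div_rpow hp.le hb.le, div_div]

lemma integral_exp_neg_mul_sq_le {b : ℝ} (hb : 0 < b) {u v : ℝ} (huv : u ≤ v) :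
    ∫ t in u..v, exp (-b * t ^ 2) ≤ √(π / b) := by
  rw [← integral_gaussian b, intervalIntegral.integral_of_le huv]
  exact setIntegral_le_integral (integrable_exp_neg_mul_sq hb)
    (Filter.Eventually.of_forall fun _ ↦ (exp_pos _).le)

end Real

lemma Complex.norm_exp_sub_sum_range_le (z : ℂ) (n : ℕ) :
    ‖Complex.exp z - ∑ m ∈ range n, z ^ m / (m ! : ℂ)‖ ≤ ‖z‖ ^ n / n ! * Real.exp ‖z‖ :=
  (norm_exp_sub_sum_le_exp_norm_sub_sum z n).trans
    (Real.exp_sub_sum_range_le_pow_div_factorial_mul_exp (norm_nonneg z) n)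

lemma sqrt_pow_three_mul_div_factorial_le (m : ℕ) :
    √(m : ℝ) ^ (3 * m) / m ! ≤ exp 1 ^ m * √(m : ℝ) ^ m := by
  have hfac : (m : ℝ) ^ m / m ! ≤ exp 1 ^ m := by
    rw [exp_one_pow]; exact pow_div_factorial_le_exp _ m.cast_nonneg m
  have hsplit : √(m : ℝ) ^ (3 * m) = (m : ℝ) ^ m * √(m : ℝ) ^ m := by
    rw [show 3 * m = 2 * m + m by ring, pow_add, pow_mul, sq_sqrt m.cast_nonneg]
  rw [hsplit, mul_div_right_comm]
  gcongr

lemma sqrt_succ_pow_succ_le {k : ℕ} (hk : 1 ≤ k) :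
    √((k + 1 : ℕ) : ℝ) ^ (k + 1) ≤ 2 ^ k * √(k : ℝ) ^ k := by
  have hsq : ∀ n : ℕ, ∀ x : ℝ, 0 ≤ x → (√x ^ n) ^ 2 = x ^ n := fun n x hx ↦ by
    rw [← pow_mul, mul_comm, pow_mul, sq_sqrt hx]
  rw [← pow_le_pow_iff_left₀ (by positivity) (by positivity) two_ne_zero, mul_pow,
    hsq _ _ (by positivity), hsq _ _ (by positivity)]
  have h1 : ((k + 1 : ℕ) : ℝ) ≤ 2 * k := by push_cast; exact_mod_cast (by omega : k + 1 ≤ 2 * k)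
  have h2 : ((k + 1 : ℕ) : ℝ) ≤ 2 ^ k := by exact_mod_cast Nat.lt_two_pow_self
  calc ((k + 1 : ℕ) : ℝ) ^ (k + 1) = ((k + 1 : ℕ) : ℝ) ^ k * ((k + 1 : ℕ) : ℝ) := pow_succ _ _
    _ ≤ (2 * k) ^ k * 2 ^ k := by gcongr
    _ = (2 ^ k) ^ 2 * (k : ℝ) ^ k := by ring

lemma nine_pow_mul_sqrt_pow_div_factorial_le {k : ℕ} (hk : 1 ≤ k) :
    9 ^ (k + 1) * (√((k + 1 : ℕ) : ℝ) ^ (3 * (k + 1)) / (k + 1)!) * √(6 * π) ≤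
      (2 * (9 * exp 1) * (9 * exp 1 * √(6 * π))) ^ k * √(k : ℝ) ^ k := by
  have hAB : 1 ≤ 9 * exp 1 * √(6 * π) := one_le_mul_of_one_le_of_one_le
    (by linarith [add_one_le_exp 1]) (one_le_sqrt.2 (by linarith [pi_gt_three]))
  calc 9 ^ (k + 1) * (√((k + 1 : ℕ) : ℝ) ^ (3 * (k + 1)) / (k + 1)!) * √(6 * π)
      ≤ 9 ^ (k + 1) * (exp 1 ^ (k + 1) * √((k + 1 : ℕ) : ℝ) ^ (k + 1)) * √(6 * π) := by
        gcongr; exact sqrt_pow_three_mul_div_factorial_le _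
    _ ≤ 9 ^ (k + 1) * (exp 1 ^ (k + 1) * (2 ^ k * √(k : ℝ) ^ k)) * √(6 * π) := by
        gcongr; exact sqrt_succ_pow_succ_le hk
    _ = (2 * (9 * exp 1)) ^ k * (9 * exp 1 * √(6 * π)) * √(k : ℝ) ^ k := by
        rw [mul_pow 2, mul_pow 9]; ring
    _ ≤ (2 * (9 * exp 1)) ^ k * (9 * exp 1 * √(6 * π)) ^ k * √(k : ℝ) ^ k := by
        gcongr; exact le_self_pow₀ hAB (by omega)
    _ = (2 * (9 * exp 1) * (9 * exp 1 * √(6 * π))) ^ k * √(k : ℝ) ^ k := by rw [← mul_pow]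

section Cumulants

variable {d : ℕ} {γ r ξ : ℝ}

lemma natCast_div_lt_one (hγ : (d : ℝ) < γ) : (d : ℝ) / γ < 1 :=
  (div_lt_one (by linarith [d.cast_nonneg (α := ℝ)])).2 hγ

lemma continuous_kt_integrand (hγ : (d : ℝ) < γ) {n : ℕ} (hn : 2 ≤ n) :
    Continuous fun u : ℝ ↦ Real.exp (ξ * u / rho d r) * u ^ ((n : ℝ) - 1 - d / γ) := by
  have h2n : (2 : ℝ) ≤ n := by exact_mod_cast hn
  exact (by fun_prop : Continuous fun u : ℝ ↦ Real.exp (ξ * u / rho d r)).mul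
    (Real.continuous_rpow_const (by linarith [natCast_div_lt_one hγ]))

lemma kt_nonneg (hγ : (d : ℝ) < γ) (n : ℕ) : 0 ≤ kt d γ r ξ n :=
  mul_nonneg (by linarith [natCast_div_lt_one hγ]) <| intervalIntegral.integral_nonneg zero_le_one
    fun u hu ↦ mul_nonneg (Real.exp_pos _).le (Real.rpow_nonneg hu.1 _)

lemma kt_le_kt_two (hγ : (d : ℝ) < γ) {n : ℕ} (hn : 2 ≤ n) : kt d γ r ξ n ≤ kt d γ r ξ 2 := by
  have h2n : (2 : ℝ) ≤ n := by exact_mod_cast hn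
  refine mul_le_mul_of_nonneg_left ?_ (by linarith [natCast_div_lt_one hγ])
  refine intervalIntegral.integral_mono_on zero_le_one
    ((continuous_kt_integrand hγ hn).intervalIntegrable 0 1)
    ((continuous_kt_integrand hγ le_rfl).intervalIntegrable 0 1) fun u hu ↦ ?_
  refine mul_le_mul_of_nonneg_left ?_ (Real.exp_pos _).le
  exact Real.rpow_le_rpow_of_exponent_ge' hu.1 hu.2
    (by push_cast; linarith [natCast_div_lt_one hγ]) (by push_cast; linarith)

lemma kt_two_pos (hγ : (d : ℝ) < γ) : 0 < kt d γ r ξ 2 := by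
  refine mul_pos (by linarith [natCast_div_lt_one hγ]) <|
    intervalIntegral.intervalIntegral_pos_of_pos_on
      ((continuous_kt_integrand hγ le_rfl).intervalIntegrable 0 1) (fun u hu ↦ ?_) zero_lt_one
  exact mul_pos (Real.exp_pos _) (Real.rpow_pos_of_pos hu.1 _)

end Cumulants

@[fun_prop]
lemma continuous_qk (d : ℕ) (γ r ξ : ℝ) (k : ℕ) : Continuous (qk d γ r ξ k) := by
  unfold qk; fun_prop

lemma norm_qk_le {d : ℕ} {γ r ξ : ℝ} (hγ : (d : ℝ) < γ) (hρ : 0 < rho d r) (k : ℕ) {t : ℝ}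
    (ht : |t| ≤ rho d r / 2) :
    ‖qk d γ r ξ k t‖ ≤ kt d γ r ξ 2 * |t| ^ 3 / (3 * rho d r) := by
  set ρ := rho d r
  set K := kt d γ r ξ 2
  set x := |t| / ρ
  have hK : 0 < K := kt_two_pos hγ
  have hx : ‖Complex.I * t / (ρ : ℂ)‖ = x := by
    simp [x, abs_of_pos hρ]
  have hx0 : 0 ≤ x := by positivity
  have hx2 : x ≤ 1 / 2 := by rw [div_le_iff₀ hρ]; linarith
  have hterm : ∀ n ∈ Icc 3 (k + 2),
      ‖(Complex.I * t / (ρ : ℂ)) ^ n * ((kt d γ r ξ n / n ! : ℝ) : ℂ)‖ ≤ K / 6 * x ^ n := by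
    intro n hn
    have h3n : 3 ≤ n := (mem_Icc.1 hn).1
    have hfac : (6 : ℝ) ≤ n ! := by exact_mod_cast Nat.factorial_le h3n
    have h2n : 2 ≤ n := by omega
    rw [norm_mul, norm_pow, hx, Complex.norm_real, Real.norm_of_nonneg
      (div_nonneg (kt_nonneg hγ n) (by positivity)), mul_comm]
    exact mul_le_mul_of_nonneg_right
      (div_le_div₀ hK.le (kt_le_kt_two hγ h2n) (by norm_num) hfac) (pow_nonneg hx0 n)
  have hgeo : ∑ n ∈ Icc 3 (k + 2), x ^ n ≤ 2 * x ^ 3 := by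
    rw [← Ico_add_one_right_eq_Icc]
    refine (geom_sum_Ico_le_of_lt_one hx0 (by linarith)).trans ?_
    rw [div_le_iff₀ (by linarith)]
    nlinarith [pow_nonneg hx0 3]
  calc ‖qk d γ r ξ k t‖
      = ρ ^ 2 * ‖∑ n ∈ Icc 3 (k + 2),
          (Complex.I * t / (ρ : ℂ)) ^ n * ((kt d γ r ξ n / n ! : ℝ) : ℂ)‖ := by
        rw [qk, norm_mul, norm_pow, Complex.norm_real, Real.norm_of_nonneg hρ.le]
    _ ≤ ρ ^ 2 * (K / 6 * ∑ n ∈ Icc 3 (k + 2), x ^ n) := by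
        rw [mul_sum]
        gcongr
        exact (norm_sum_le _ _).trans (sum_le_sum hterm)
    _ ≤ ρ ^ 2 * (K / 6 * (2 * x ^ 3)) := by gcongr
    _ = K * |t| ^ 3 / (3 * ρ) := by
        simp only [x]
        field_simp
        ring

lemma exp_mul_norm_exp_qk_sub_sum_le {d : ℕ} {γ r ξ : ℝ} (hγ : (d : ℝ) < γ) (hρ : 0 < rho d r)
    (k : ℕ) {t : ℝ} (ht : |t| ≤ rho d r / 2) :
    exp (-(t ^ 2) * kt d γ r ξ 2 / 2) *
        ‖Complex.exp (qk d γ r ξ k t) -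
          ∑ l ∈ range (k + 1), qk d γ r ξ k t ^ l / ((l ! : ℝ) : ℂ)‖ ≤
      (kt d γ r ξ 2 / (3 * rho d r)) ^ (k + 1) / (k + 1)! *
        √(9 * ((k + 1 : ℕ) : ℝ) / kt d γ r ξ 2) ^ (3 * (k + 1)) *
          exp (-(kt d γ r ξ 2 / 6) * t ^ 2) := by
  set ρ := rho d r
  set K := kt d γ r ξ 2
  set q := qk d γ r ξ k t
  have hK : 0 < K := kt_two_pos hγ
  have hq : ‖q‖ ≤ K * |t| ^ 3 / (3 * ρ) := norm_qk_le hγ hρ k ht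
  have hq' : ‖q‖ ≤ K * t ^ 2 / 6 := hq.trans <| by
    rw [div_le_div_iff₀ (by positivity) (by norm_num), pow_succ, sq_abs]
    nlinarith [mul_le_mul_of_nonneg_left ht (by positivity : 0 ≤ K * t ^ 2)]
  have htaylor : ‖Complex.exp q - ∑ l ∈ range (k + 1), q ^ l / ((l ! : ℝ) : ℂ)‖ ≤
      (K / (3 * ρ)) ^ (k + 1) * |t| ^ (3 * (k + 1)) / (k + 1)! * exp (K * t ^ 2 / 6) := by
    simp only [Complex.ofReal_natCast]
    refine (Complex.norm_exp_sub_sum_range_le q (k + 1)).trans ?_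
    rw [pow_mul, ← mul_pow]
    gcongr
    exact hq.trans_eq (by ring)
  have hgauss := abs_pow_mul_exp_neg_mul_sq_le (b := K / 6) (by positivity) (n := 3 * (k + 1))
    (by omega) t
  calc exp (-(t ^ 2) * K / 2) * ‖Complex.exp q - ∑ l ∈ range (k + 1), q ^ l / ((l ! : ℝ) : ℂ)‖
      ≤ exp (-(t ^ 2) * K / 2) *
          ((K / (3 * ρ)) ^ (k + 1) * |t| ^ (3 * (k + 1)) / (k + 1)! * exp (K * t ^ 2 / 6)) := by
        gcongr
    _ = (K / (3 * ρ)) ^ (k + 1) / (k + 1)! *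
          (|t| ^ (3 * (k + 1)) * exp (-(K / 6) * t ^ 2)) * exp (-(K / 6) * t ^ 2) := by
        have hexp : exp (-(t ^ 2) * K / 2) * exp (K * t ^ 2 / 6) =
            exp (-(K / 6) * t ^ 2) * exp (-(K / 6) * t ^ 2) := by
          rw [← exp_add, ← exp_add]; ring_nf
        linear_combination (K / (3 * ρ)) ^ (k + 1) * |t| ^ (3 * (k + 1)) / (k + 1)! * hexp
    _ ≤ _ := by
        gcongr
        refine hgauss.trans_eq ?_
        congr 2
        push_cast
        field_simp
        ring

lemma remainder_bound_eq {K ρ : ℝ} (hK : 0 < K) (hρ : 0 < ρ) (m : ℕ) :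
    (K / (3 * ρ)) ^ m / m ! * √(9 * (m : ℝ) / K) ^ (3 * m) * √(π / (K / 6)) =
      9 ^ m * (√(m : ℝ) ^ (3 * m) / m !) * √(6 * π) / (√K * (√K * ρ) ^ m) := by
  obtain ⟨S, hS, rfl⟩ : ∃ S, 0 < S ∧ K = S ^ 2 := ⟨√K, sqrt_pos.2 hK, (sq_sqrt hK.le).symm⟩
  rw [show π / (S ^ 2 / 6) = 6 * π / S ^ 2 by field_simp, sqrt_div' _ (by positivity),
    sqrt_div' _ (by positivity), sqrt_mul (by norm_num), sqrt_sq hS.le,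
    show √9 = 3 by rw [show (9 : ℝ) = 3 ^ 2 by norm_num, sqrt_sq (by norm_num)]]
  rw [show (9 : ℝ) = 3 ^ 2 by norm_num, ← pow_mul]
  simp only [div_pow, mul_pow]
  field_simp
  ring

theorem truncate_exp_upper_general (d : ℕ) (γ : ℝ) (hγ : (d : ℝ) < γ) :
    ∃ C : ℝ, 0 < C ∧
      ∀ (r : ℝ), 1 ≤ r → ∀ k : ℕ, 1 ≤ k → ∀ ξ : ℝ, 0 ≤ ξ →
        (∫ t in (-(rho d r / 2))..(rho d r / 2),
            Real.exp (-(t ^ 2) * kt d γ r ξ 2 / 2) *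
              ‖Complex.exp (qk d γ r ξ k t) -
                ∑ l ∈ Finset.range (k + 1), qk d γ r ξ k t ^ l / ((l.factorial : ℝ) : ℂ)‖) ≤
          C ^ k * (k : ℝ) ^ ((k : ℝ) / 2) /
            (Real.sqrt (kt d γ r ξ 2) * (Real.sqrt (kt d γ r ξ 2) * rho d r) ^ (k + 1)) := by
  refine ⟨2 * (9 * exp 1) * (9 * exp 1 * √(6 * π)), by positivity, fun r hr k hk ξ _ ↦ ?_⟩
  have hρ : 0 < rho d r := rpow_pos_of_pos (by linarith) _
  have hK : 0 < kt d γ r ξ 2 := kt_two_pos hγ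
  calc _ ≤ ∫ t in (-(rho d r / 2))..(rho d r / 2),
          (kt d γ r ξ 2 / (3 * rho d r)) ^ (k + 1) / (k + 1)! *
            √(9 * ((k + 1 : ℕ) : ℝ) / kt d γ r ξ 2) ^ (3 * (k + 1)) *
              exp (-(kt d γ r ξ 2 / 6) * t ^ 2) :=
        intervalIntegral.integral_mono_on (by linarith)
          ((by fun_prop : Continuous _).intervalIntegrable _ _)
          ((by fun_prop : Continuous _).intervalIntegrable _ _)
          fun t ht ↦ exp_mul_norm_exp_qk_sub_sum_le hγ hρ k (abs_le.2 ht)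
    _ ≤ (kt d γ r ξ 2 / (3 * rho d r)) ^ (k + 1) / (k + 1)! *
          √(9 * ((k + 1 : ℕ) : ℝ) / kt d γ r ξ 2) ^ (3 * (k + 1)) *
            √(π / (kt d γ r ξ 2 / 6)) := by
        rw [intervalIntegral.integral_const_mul]
        gcongr
        exact integral_exp_neg_mul_sq_le (by positivity) (by linarith)
    _ ≤ _ := by
        rw [remainder_bound_eq hK hρ, rpow_div_two_eq_sqrt _ k.cast_nonneg, rpow_natCast]
        exact div_le_div_of_nonneg_right (nine_pow_mul_sqrt_pow_div_factorial_le hk) (by positivity)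

/-- Lemma 3.3 (upper tail). -/
theorem truncate_exp_upper (d : ℕ) (hd : 1 ≤ d) (γ : ℝ) (hγ : (d : ℝ) < γ) :
    ∃ C : ℝ, 0 < C ∧
      ∀ (r : ℝ), 1 ≤ r → ∀ k : ℕ, 1 ≤ k → ∀ ξ : ℝ, 0 ≤ ξ →
        (∫ t in (-(rho d r / 2))..(rho d r / 2),
            Real.exp (-(t ^ 2) * kt d γ r ξ 2 / 2) *
              ‖Complex.exp (qk d γ r ξ k t) -
                ∑ l ∈ Finset.range (k + 1), qk d γ r ξ k t ^ l / ((l.factorial : ℝ) : ℂ)‖) ≤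
          C ^ k * (k : ℝ) ^ ((k : ℝ) / 2) /
            (Real.sqrt (kt d γ r ξ 2) * (Real.sqrt (kt d γ r ξ 2) * rho d r) ^ (k + 1)) :=
  truncate_exp_upper_general d γ hγ
end
end

section
/- There exist constants D ≥ 3 and c > 0, depending only on d and γ, such that for all r ≥ 1 and all ζ ≥ 0 with ζ/ρ ≥ D, taking ξ = −ζ, for every real t with |t| ≥ ζ/3 one has |E(t)| ≤ exp( −c ρ^{d₁} |t|^{d/γ} ). (Lemma 3.13.) -/
open MeasureTheory Finset

noncomputable section

/-- E(t) = exp( d₁ ρ² ∫₀¹ e^{ξu/ρ} (e^{itu/ρ} − 1 − itu/ρ) u^{−1−d/γ} du ) -/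
def Efun (d : ℕ) (γ r ξ : ℝ) (t : ℝ) : ℂ :=
  Complex.exp ((((2 - (d : ℝ) / γ) * (rho d r) ^ 2 : ℝ) : ℂ) *
    ∫ u in (0:ℝ)..1,
      ((Real.exp (ξ * u / rho d r) : ℝ) : ℂ) *
        (Complex.exp (Complex.I * (t : ℂ) * (u : ℂ) / ((rho d r : ℝ) : ℂ)) - 1 -
          Complex.I * (t : ℂ) * (u : ℂ) / ((rho d r : ℝ) : ℂ)) *
        ((u ^ (-1 - (d : ℝ) / γ) : ℝ) : ℂ))


/-!
Since `‖exp z‖ = exp (re z)`, the claim is an upper bound for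
`d₁ ρ² ∫₀¹ e^{-ζu/ρ} (cos (tu/ρ) - 1) u^{-1-α} du` with `α = d/γ`, whose integrand is `≤ 0`.
Keep only `u ∈ [0, ρ/|t|]` (a subinterval of `[0, 1]` because `ζ/ρ ≥ 3` and `|t| ≥ ζ/3` give
`|t| ≥ ρ`). There `cos x - 1 ≤ -(2/π²) x²`, and `ζ ≤ 3|t|` gives `e^{-ζu/ρ} ≥ e^{-3}`, so the
integral is at most
`-(2/π²) e^{-3} (t/ρ)² ∫₀^{ρ/|t|} u^{1-α} du = -(2/π²) e^{-3} (|t|/ρ)^α / (2 - α)`.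
The factor `2 - α` cancels `d₁`, and `ρ² (|t|/ρ)^α = ρ^{2-α} |t|^α`.
-/

open Real

def Eintegrand (ξ t ρ α u : ℝ) : ℂ :=
  ((Real.exp (ξ * u / ρ) : ℝ) : ℂ) *
    (Complex.exp (Complex.I * (t : ℂ) * (u : ℂ) / ((ρ : ℝ) : ℂ)) - 1 -
      Complex.I * (t : ℂ) * (u : ℂ) / ((ρ : ℝ) : ℂ)) *
    ((u ^ (-1 - α) : ℝ) : ℂ)

lemma Efun_eq_cexp_integral_Eintegrand (d : ℕ) (γ r ξ t : ℝ) :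
    Efun d γ r ξ t = Complex.exp ((((2 - (d : ℝ) / γ) * rho d r ^ 2 : ℝ) : ℂ) *
      ∫ u in (0:ℝ)..1, Eintegrand ξ t (rho d r) ((d : ℝ) / γ) u) :=
  rfl

lemma norm_cexp_I_mul_sub_one_sub_le (x : ℝ) :
    ‖Complex.exp (Complex.I * x) - 1 - Complex.I * x‖ ≤ 2 * x ^ 2 := by
  have hIx : ‖Complex.I * x‖ = |x| := by simp
  rcases le_or_gt |x| 1 with hx | hx
  · calc ‖Complex.exp (Complex.I * x) - 1 - Complex.I * x‖ ≤ ‖Complex.I * x‖ ^ 2 :=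
          Complex.norm_exp_sub_one_sub_id_le (hIx ▸ hx)
      _ ≤ 2 * x ^ 2 := by rw [hIx, sq_abs]; nlinarith [sq_nonneg x]
  · calc ‖Complex.exp (Complex.I * x) - 1 - Complex.I * x‖
          ≤ ‖Complex.exp (Complex.I * x) - 1‖ + ‖Complex.I * x‖ := norm_sub_le _ _
      _ ≤ |x| + |x| := by
          rw [hIx]
          gcongr
          simpa using Real.norm_exp_I_mul_ofReal_sub_one_le (x := x)
      _ ≤ 2 * x ^ 2 := by nlinarith [sq_abs x]

lemma I_mul_mul_div_eq (t u ρ : ℝ) :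
    Complex.I * (t : ℂ) * (u : ℂ) / ((ρ : ℝ) : ℂ) = Complex.I * ((t * u / ρ : ℝ) : ℂ) := by
  push_cast
  ring

lemma sq_mul_rpow_neg_one_sub {u : ℝ} (hu : 0 < u) (α : ℝ) :
    u ^ 2 * u ^ (-1 - α) = u ^ (1 - α) := by
  rw [← Real.rpow_natCast, ← Real.rpow_add hu]
  norm_num
  ring_nf

lemma norm_Eintegrand_le (ξ t ρ α : ℝ) {u : ℝ} (hu : 0 < u) :
    ‖Eintegrand ξ t ρ α u‖ ≤ Real.exp (ξ * u / ρ) * (2 * (t / ρ) ^ 2 * u ^ (1 - α)) := by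
  rw [Eintegrand, I_mul_mul_div_eq, norm_mul, norm_mul, Complex.norm_real, Complex.norm_real,
    Real.norm_of_nonneg (Real.exp_pos _).le, Real.norm_of_nonneg (Real.rpow_nonneg hu.le _)]
  calc _ ≤ Real.exp (ξ * u / ρ) * (2 * (t * u / ρ) ^ 2) * u ^ (-1 - α) := by
        gcongr
        exact norm_cexp_I_mul_sub_one_sub_le _
    _ = Real.exp (ξ * u / ρ) * (2 * (t / ρ) ^ 2 * (u ^ 2 * u ^ (-1 - α))) := by ring
    _ = _ := by rw [sq_mul_rpow_neg_one_sub hu]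

lemma intervalIntegrable_Eintegrand (ξ t ρ : ℝ) {α : ℝ} (hα : α < 2) :
    IntervalIntegrable (Eintegrand ξ t ρ α) volume 0 1 := by
  have hdom : IntervalIntegrable (fun u => Real.exp (ξ * u / ρ) * (2 * (t / ρ) ^ 2 * u ^ (1 - α)))
      volume 0 1 :=
    ((intervalIntegral.intervalIntegrable_rpow' (by linarith)).const_mul _).continuousOn_mul
      (by fun_prop)
  refine hdom.mono_fun' ?_ ?_
  · exact (by unfold Eintegrand; fun_prop : Measurable (Eintegrand ξ t ρ α)).aestronglyMeasurable
  · rw [Set.uIoc_of_le zero_le_one]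
    filter_upwards [ae_restrict_mem measurableSet_Ioc] with u hu
    exact norm_Eintegrand_le ξ t ρ α hu.1

lemma re_Eintegrand (ξ t ρ α u : ℝ) :
    (Eintegrand ξ t ρ α u).re =
      Real.exp (ξ * u / ρ) * (Real.cos (t * u / ρ) - 1) * u ^ (-1 - α) := by
  rw [Eintegrand, I_mul_mul_div_eq, mul_comm Complex.I]
  simp only [Complex.mul_re, Complex.mul_im, Complex.ofReal_re, Complex.ofReal_im,
    Complex.sub_re, Complex.sub_im, Complex.one_re, Complex.one_im,
    Complex.exp_ofReal_mul_I_re, Complex.exp_ofReal_mul_I_im, Complex.I_re, Complex.I_im]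
  ring

lemma intervalIntegrable_exp_mul_cos_sub_one (ξ t ρ : ℝ) {α : ℝ} (hα : α < 2) :
    IntervalIntegrable
      (fun u => Real.exp (ξ * u / ρ) * (Real.cos (t * u / ρ) - 1) * u ^ (-1 - α)) volume 0 1 := by
  have h := intervalIntegrable_Eintegrand ξ t ρ hα
  have hre : IntervalIntegrable (fun u => (Eintegrand ξ t ρ α u).re) volume 0 1 :=
    ⟨h.1.re, h.2.re⟩
  simpa only [re_Eintegrand] using hre

lemma norm_Efun (d : ℕ) {γ : ℝ} (r ξ t : ℝ) (hα : (d : ℝ) / γ < 2) :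
    ‖Efun d γ r ξ t‖ = Real.exp ((2 - (d : ℝ) / γ) * rho d r ^ 2 *
      ∫ u in (0:ℝ)..1, Real.exp (ξ * u / rho d r) * (Real.cos (t * u / rho d r) - 1) *
        u ^ (-1 - (d : ℝ) / γ)) := by
  rw [Efun_eq_cexp_integral_Eintegrand, Complex.norm_exp, Complex.re_ofReal_mul,
    ← RCLike.re_to_complex,
    ← intervalIntegral.intervalIntegral_re (intervalIntegrable_Eintegrand _ _ _ hα)]
  simp only [RCLike.re_to_complex, re_Eintegrand]

lemma exp_mul_cos_sub_one_mul_rpow_le {ζ t ρ α u : ℝ} (hρ : 0 < ρ) (hu : 0 < u)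
    (hut : |t| * u ≤ ρ) (hζt : ζ ≤ 3 * |t|) :
    Real.exp (-ζ * u / ρ) * (Real.cos (t * u / ρ) - 1) * u ^ (-1 - α) ≤
      -(2 / π ^ 2 * Real.exp (-3)) * (t / ρ) ^ 2 * u ^ (1 - α) := by
  have hx : |t * u / ρ| ≤ π := by
    rw [abs_div, abs_mul, abs_of_pos hu, abs_of_pos hρ, div_le_iff₀ hρ]
    nlinarith [Real.pi_gt_three]
  have hcos : Real.cos (t * u / ρ) - 1 ≤ -(2 / π ^ 2 * (t * u / ρ) ^ 2) := by
    linarith [Real.cos_le_one_sub_mul_cos_sq hx]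
  have hexp : Real.exp (-3) ≤ Real.exp (-ζ * u / ρ) := by
    rw [Real.exp_le_exp, neg_mul, neg_div, neg_le_neg_iff, div_le_iff₀ hρ]
    nlinarith
  calc Real.exp (-ζ * u / ρ) * (Real.cos (t * u / ρ) - 1) * u ^ (-1 - α)
      ≤ Real.exp (-3) * -(2 / π ^ 2 * (t * u / ρ) ^ 2) * u ^ (-1 - α) := by
        gcongr ?_ * _
        calc _ ≤ Real.exp (-3) * (Real.cos (t * u / ρ) - 1) :=
              mul_le_mul_of_nonpos_right hexp (by linarith [Real.cos_le_one (t * u / ρ)])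
          _ ≤ _ := by gcongr
    _ = -(2 / π ^ 2 * Real.exp (-3)) * (t / ρ) ^ 2 * (u ^ 2 * u ^ (-1 - α)) := by ring
    _ = _ := by rw [sq_mul_rpow_neg_one_sub hu]

lemma rpow_two_mul_inv_div_rpow {ρ x α : ℝ} (hρ : 0 < ρ) (hx : 0 < x) :
    (x / ρ) ^ 2 * (ρ / x) ^ (2 - α) = (x / ρ) ^ α := by
  have hxρ : 0 < x / ρ := div_pos hx hρ
  rw [← inv_div x ρ, Real.inv_rpow hxρ.le, ← Real.rpow_neg hxρ.le, ← Real.rpow_natCast,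
    ← Real.rpow_add hxρ]
  norm_num

lemma integral_exp_mul_cos_sub_one_le {ζ t ρ α : ℝ} (hα : α < 2) (hρ : 0 < ρ)
    (hρt : ρ ≤ |t|) (hζt : ζ ≤ 3 * |t|) :
    ∫ u in (0:ℝ)..1, Real.exp (-ζ * u / ρ) * (Real.cos (t * u / ρ) - 1) * u ^ (-1 - α) ≤
      -(2 / π ^ 2 * Real.exp (-3)) / (2 - α) * (|t| / ρ) ^ α := by
  set g := fun u => Real.exp (-ζ * u / ρ) * (Real.cos (t * u / ρ) - 1) * u ^ (-1 - α)
  set C := 2 / π ^ 2 * Real.exp (-3)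
  set b := ρ / |t|
  have ht : 0 < |t| := hρ.trans_le hρt
  have hb : 0 < b := div_pos hρ ht
  have hb1 : b ≤ 1 := (div_le_one ht).2 hρt
  have hg : IntervalIntegrable g volume 0 1 := intervalIntegrable_exp_mul_cos_sub_one _ _ _ hα
  have hg_nonpos : ∀ u, 0 < u → g u ≤ 0 := fun u hu =>
    mul_nonpos_of_nonpos_of_nonneg
      (mul_nonpos_of_nonneg_of_nonpos (Real.exp_pos _).le
        (sub_nonpos.2 (Real.cos_le_one _)))
      (Real.rpow_nonneg hu.le _)
  have hrpow : IntervalIntegrable (fun u : ℝ => -C * (t / ρ) ^ 2 * u ^ (1 - α)) volume 0 b :=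
    (intervalIntegral.intervalIntegrable_rpow' (by linarith)).const_mul _
  -- the integrand is nonpositive, so only the initial piece `[0, b]` matters
  have h_restrict : ∫ u in (0:ℝ)..1, g u ≤ ∫ u in (0:ℝ)..b, g u := by
    have := intervalIntegral.integral_mono_interval le_rfl hb.le hb1
      (by filter_upwards [ae_restrict_mem measurableSet_Ioc] with u hu
          exact neg_nonneg.2 (hg_nonpos u hu.1)) hg.neg
    simp only [Pi.neg_apply, intervalIntegral.integral_neg] at this
    linarith
  have h_compare : ∫ u in (0:ℝ)..b, g u ≤ ∫ u in (0:ℝ)..b, -C * (t / ρ) ^ 2 * u ^ (1 - α) := by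
    refine intervalIntegral.integral_mono_on_of_le_Ioo hb.le
      (hg.mono_set (Set.uIcc_subset_uIcc_left (by simp [hb.le, hb1]))) hrpow fun u hu => ?_
    refine exp_mul_cos_sub_one_mul_rpow_le hρ hu.1 ?_ hζt
    calc |t| * u ≤ |t| * b := by gcongr; exact hu.2.le
      _ = ρ := mul_div_cancel₀ ρ ht.ne'
  have h_eval : ∫ u in (0:ℝ)..b, -C * (t / ρ) ^ 2 * u ^ (1 - α) =
      -C / (2 - α) * (|t| / ρ) ^ α := by
    rw [intervalIntegral.integral_const_mul, integral_rpow (by left; linarith),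
      Real.zero_rpow (by linarith), sub_zero, ← rpow_two_mul_inv_div_rpow hρ ht,
      show 1 - α + 1 = 2 - α by ring, div_pow, div_pow, sq_abs]
    ring
  linarith

lemma sq_mul_div_rpow {ρ x : ℝ} (α : ℝ) (hρ : 0 < ρ) (hx : 0 ≤ x) :
    ρ ^ 2 * (x / ρ) ^ α = ρ ^ (2 - α) * x ^ α := by
  rw [Real.div_rpow hx hρ.le, Real.rpow_sub hρ, Real.rpow_two]
  field_simp

theorem tail_bound_E_lower_general (d : ℕ) (γ : ℝ) (hγ : (d : ℝ) < γ) :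
    ∃ D c : ℝ, 3 ≤ D ∧ 0 < c ∧
      ∀ (r : ℝ), 1 ≤ r → ∀ ζ : ℝ, 0 ≤ ζ → D ≤ ζ / rho d r →
        ∀ t : ℝ, ζ / 3 ≤ |t| →
          ‖Efun d γ r (-ζ) t‖ ≤
            Real.exp (-c * rho d r ^ (2 - (d : ℝ) / γ) * |t| ^ ((d : ℝ) / γ)) := by
  have hC : 0 < 2 / π ^ 2 * Real.exp (-3) := by positivity
  set C := 2 / π ^ 2 * Real.exp (-3)
  refine ⟨3, C, le_rfl, hC, fun r hr ζ _ hD t ht => ?_⟩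
  set ρ := rho d r
  set α := (d : ℝ) / γ
  have hρ : 0 < ρ := Real.rpow_pos_of_pos (by linarith) _
  have hd₁ : 0 < 2 - α := by
    have hγ₀ : 0 < γ := (Nat.cast_nonneg d).trans_lt hγ
    linarith [(div_lt_one hγ₀).2 hγ]
  have hρt : ρ ≤ |t| := by
    rw [le_div_iff₀ hρ] at hD
    linarith
  rw [norm_Efun d r (-ζ) t (by linarith), Real.exp_le_exp]
  calc _ ≤ (2 - α) * ρ ^ 2 * (-C / (2 - α) * (|t| / ρ) ^ α) := by
        gcongr
        exact integral_exp_mul_cos_sub_one_le (by linarith) hρ hρt (by linarith)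
    _ = -C * (ρ ^ 2 * (|t| / ρ) ^ α) := by field_simp
    _ = -C * ρ ^ (2 - α) * |t| ^ α := by rw [sq_mul_div_rpow α hρ (abs_nonneg t), mul_assoc]

/-- Lemma 3.13 (lower tail, ξ = −ζ): tail bound on |E(t)| when ζ/ρ ≥ D and |t| ≥ ζ/3. -/
theorem tail_bound_E_lower (d : ℕ) (hd : 1 ≤ d) (γ : ℝ) (hγ : (d : ℝ) < γ) :
    ∃ D c : ℝ, 3 ≤ D ∧ 0 < c ∧
      ∀ (r : ℝ), 1 ≤ r → ∀ ζ : ℝ, 0 ≤ ζ → D ≤ ζ / rho d r →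
        ∀ t : ℝ, ζ / 3 ≤ |t| →
          ‖Efun d γ r (-ζ) t‖ ≤
            Real.exp (-c * rho d r ^ (2 - (d : ℝ) / γ) * |t| ^ ((d : ℝ) / γ)) :=
  tail_bound_E_lower_general d γ hγ
end
end
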